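/- Assume the separation hypothesis. Let λ, μ ∈ P_n with λ ⊴ μ and λ ≠ μ. Suppose g is a tableau of shape μ which is not standard, but such that for some 1 ≤ k ≤ n−1 the tableau obtained from g by interchanging the entries k and k+1 is standard (a Garnir tableau). If there exists a standard tableau t of shape λ with res(t) = res(g), then λ ⊴' μ. -/

import Mathlib

/-- The total order on boxes `(i,l)`: `(i,l) ≤ (i',l')` iff `l < l'`, or `l = l'`
and `i ≤ i'`. -/
def bLE {p d : ℕ} (b b' : Fin p × Fin d) : Prop :=
  b.2 < b'.2 ∨ (b.2 = b'.2 ∧ b.1 ≤ b'.1)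

/-- The strict version of the total order on boxes. -/
def bLT {p d : ℕ} (b b' : Fin p × Fin d) : Prop :=
  b.2 < b'.2 ∨ (b.2 = b'.2 ∧ b.1 < b'.1)

/-- The partial order `≤'` on boxes: `(i,l) ≤' (i',l')` iff `l < l'` or
`(i,l) = (i',l')`. -/
def bLE' {p d : ℕ} (b b' : Fin p × Fin d) : Prop :=
  b.2 < b'.2 ∨ b = b'

/-- A 3D multipartition of `n` with at most two nonempty components: either a
single column of `n` nodes on a box, or two columns of sizes `c₁ ≥ 1` and
`n - c₁ ≥ 1` on boxes `b₁ < b₂` (in the total order). -/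
inductive MP (p d n : ℕ) : Type where
  | single (b : Fin p × Fin d) : MP p d n
  | double (b₁ b₂ : Fin p × Fin d) (c₁ : ℕ)
      (hlt : bLT b₁ b₂) (hc1 : 1 ≤ c₁) (hc2 : c₁ < n) : MP p d n

/-- The dominance-type relation on multipartitions associated to a relation `rB`
on boxes; with `rB = bLE` this is `⊴` and with `rB = bLE'` this is `⊴'`.
For doubles, `a = c₁ - c₂ = 2c₁ - n`. -/
def dom {p d n : ℕ} (rB : (Fin p × Fin d) → (Fin p × Fin d) → Prop) :
    MP p d n → MP p d n → Prop
  | .single b₁, .single b₂ => rB b₁ b₂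
  | .single _, .double _ _ _ _ _ _ => False
  | .double b₁ _ _ _ _ _, .single b₃ => rB b₁ b₃
  | .double b₁ b₂ c _ _ _, .double b₃ b₄ c' _ _ _ =>
      rB b₁ b₃ ∧ rB b₂ b₄ ∧
      (|2 * (c : ℤ) - n| < |2 * (c' : ℤ) - n| ∨
       (|2 * (c : ℤ) - n| = |2 * (c' : ℤ) - n| ∧ 2 * (c : ℤ) - n ≥ 2 * (c' : ℤ) - n) ∨
       (|2 * (c : ℤ) - n| = |2 * (c' : ℤ) - n| ∧ 2 * (c : ℤ) - n < 2 * (c' : ℤ) - n ∧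
        rB b₂ b₃))

/-- A node: a (1-based) row index together with a box. -/
abbrev Nd (p d : ℕ) : Type := ℕ × (Fin p × Fin d)

/-- The set of nodes of a multipartition. -/
def nodes {p d n : ℕ} : MP p d n → Set (Nd p d)
  | .single b => {x | x.2 = b ∧ 1 ≤ x.1 ∧ x.1 ≤ n}
  | .double b₁ b₂ c₁ _ _ _ =>
      {x | (x.2 = b₁ ∧ 1 ≤ x.1 ∧ x.1 ≤ c₁) ∨ (x.2 = b₂ ∧ 1 ≤ x.1 ∧ x.1 ≤ n - c₁)}

/-- A tableau of shape `l`: a bijection from `{1, …, n}` (modelled as `Fin n`,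
with `m : Fin n` representing the entry `m + 1`) onto the nodes of `l`. -/
def IsTab {p d n : ℕ} (l : MP p d n) (t : Fin n → Nd p d) : Prop :=
  Function.Injective t ∧ Set.range t = nodes l

/-- A standard tableau: a tableau in which, within each column, the entries
increase with the row index. -/
def IsStd {p d n : ℕ} (l : MP p d n) (t : Fin n → Nd p d) : Prop :=
  IsTab l t ∧
  ∀ m m' : Fin n, (t m).2 = (t m').2 → (t m).1 < (t m').1 → m < m'

/-- The residue of a node: the node in row `a` on box `(i,l)` has residue
`(i, j_l + 1 − a) ∈ ℤ/pℤ × ℤ/eℤ`. -/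
def resNd {p d : ℕ} (e : ℕ) (j : Fin d → ZMod e) (x : Nd p d) : ZMod p × ZMod e :=
  ((x.2.1 : ZMod p), j x.2.2 + 1 - (x.1 : ZMod e))

/-- The separation hypothesis: the `2r` elements `(i, j_l)` and `(i, j_l − 1)`,
for `(i,l) ∈ 𝒦`, are pairwise distinct. -/
def SepHyp (p d e : ℕ) (j : Fin d → ZMod e) : Prop :=
  Function.Injective (fun x : (Fin p × Fin d) × Bool =>
    (((x.1.1 : ZMod p), j x.1.2 - (if x.2 then 1 else 0)) : ZMod p × ZMod e))

/-- The total order on nodes: `(a,(i,l)) < (a',(i',l'))` iff `a < a'`, or `a = a'`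
and `l < l'`, or `a = a'`, `l = l'` and `i < i'`. -/
def ndLT {p d : ℕ} (x y : Nd p d) : Prop :=
  x.1 < y.1 ∨ (x.1 = y.1 ∧ (x.2.2 < y.2.2 ∨ (x.2.2 = y.2.2 ∧ x.2.1 < y.2.1)))


/-
The residue of a node determines the `i`-coordinate of its box, so `t` and `g` put each entry on
boxes with the same `i`-coordinate. If `μ` is a single column, the top node of the first column
of `λ` therefore shares the `i`-coordinate of `μ`'s box, and on such boxes `≤` implies `≤'`.

If both shapes have two columns, their columns carry the same pair of `i`-coordinates. Were these
distinct, `t` and `g` would have the same columns. Write `s` for `g` with `k`, `k+1` interchanged.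
As `g` is not standard but `s` is, `k` lies directly below `k+1` in a column of `g`, so `s` has
the same columns as `g`, with `k` moved up one row. In a standard tableau the row of an entry is
one more than the number of smaller entries in its column, so `t` and `s` have the same rows. Then
`k` lies in some row `a` in `t` and in row `a + 1` in `g`, and equal residues force
`(i, j_l) = (i, j_{l'} - 1)`, contradicting separation. So all four boxes share their
`i`-coordinate, and again `≤` implies `≤'` on them.
-/

lemma bLE'_of_bLE {p d : ℕ} {x y : Fin p × Fin d} (h : bLE x y) (he : x.1 = y.1) :
    bLE' x y := by
  rcases h with h | ⟨h, -⟩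
  · exact Or.inl h
  · exact Or.inr (Prod.ext he h)

section Residues

variable {p d e : ℕ} {j : Fin d → ZMod e}

lemma fin_eq_of_cast_eq {x y : Fin p} (h : (x : ZMod p) = (y : ZMod p)) : x = y := by
  have : NeZero p := ⟨x.pos.ne'⟩
  have := congrArg ZMod.val h
  rwa [ZMod.val_cast_of_lt x.isLt, ZMod.val_cast_of_lt y.isLt, ← Fin.ext_iff] at this

lemma fst_eq_of_resNd_eq {x y : Nd p d} (h : resNd e j x = resNd e j y) : x.2.1 = y.2.1 :=
  fin_eq_of_cast_eq (congrArg Prod.fst h)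

lemma resNd_ne_of_row_eq_succ (hsep : SepHyp p d e j) {x y : Nd p d} (hrow : y.1 = x.1 + 1) :
    resNd e j x ≠ resNd e j y := by
  intro h
  have hsnd := congrArg Prod.snd h
  simp only [resNd, hrow, Nat.cast_add, Nat.cast_one] at hsnd
  have hfst : (x.2.1 : ZMod p) = y.2.1 := congrArg Prod.fst h
  have := @hsep (x.2, false) (y.2, true) <| Prod.ext hfst <| by
    simp only [Bool.false_eq_true, if_false, if_true]
    linear_combination hsnd
  simp at this

end Residues

section Tableaux

variable {p d n : ℕ} {l : MP p d n} {u v : Fin n → Nd p d}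

lemma mem_nodes_of_le {x : Nd p d} (hx : x ∈ nodes l) {r : ℕ} (hr : 1 ≤ r) (hrx : r ≤ x.1) :
    (r, x.2) ∈ nodes l := by
  cases l with
  | single => exact ⟨hx.1, hr, hrx.trans hx.2.2⟩
  | double =>
    rcases hx with ⟨hb, -, hc⟩ | ⟨hb, -, hc⟩
    · exact Or.inl ⟨hb, hr, hrx.trans hc⟩
    · exact Or.inr ⟨hb, hr, hrx.trans hc⟩

lemma one_le_of_mem_nodes {x : Nd p d} (hx : x ∈ nodes l) : 1 ≤ x.1 := by
  cases l with
  | single => exact hx.2.1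
  | double => rcases hx with ⟨-, h, -⟩ | ⟨-, h, -⟩ <;> exact h

lemma IsTab.mem_nodes (hu : IsTab l u) (a : Fin n) : u a ∈ nodes l :=
  hu.2 ▸ Set.mem_range_self a

lemma IsTab.exists_apply_eq (hu : IsTab l u) {x : Nd p d} (hx : x ∈ nodes l) :
    ∃ a, u a = x := by
  rwa [← hu.2] at hx

lemma IsTab.card_filter_snd_eq_of_row_le (hu : IsTab l u) {C : Fin p × Fin d} {h : ℕ}
    (hC : ∀ r, 1 ≤ r → r ≤ h → (r, C) ∈ nodes l) :
    (Finset.univ.filter fun a => (u a).2 = C ∧ (u a).1 ≤ h).card = h := by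
  refine (Finset.card_bij (t := Finset.Icc 1 h) (fun a _ => (u a).1) ?_ ?_ ?_).trans (by simp)
  · intro a ha
    simp only [Finset.mem_filter, Finset.mem_univ, true_and] at ha
    exact Finset.mem_Icc.2 ⟨one_le_of_mem_nodes (hu.mem_nodes a), ha.2⟩
  · intro a ha a' ha' hrow
    simp only [Finset.mem_filter, Finset.mem_univ, true_and] at ha ha'
    exact hu.1 (Prod.ext hrow (ha.1.trans ha'.1.symm))
  · intro r hr
    obtain ⟨hr₁, hr₂⟩ := Finset.mem_Icc.1 hr
    obtain ⟨a, ha⟩ := hu.exists_apply_eq (hC r hr₁ hr₂)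
    exact ⟨a, by simp [ha, hr₂], by simp [ha]⟩

lemma IsStd.row_eq (hu : IsStd l u) (a : Fin n) :
    (u a).1 = (Finset.univ.filter fun a' => a' < a ∧ (u a').2 = (u a).2).card + 1 := by
  have hrow := one_le_of_mem_nodes (hu.1.mem_nodes a)
  have hfilter : (Finset.univ.filter fun a' => a' < a ∧ (u a').2 = (u a).2) =
      Finset.univ.filter fun a' => (u a').2 = (u a).2 ∧ (u a').1 ≤ (u a).1 - 1 := by
    refine Finset.filter_congr fun a' _ => ⟨fun ⟨hlt, hcol⟩ => ⟨hcol, ?_⟩, fun ⟨hcol, hle⟩ =>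
      ⟨hu.2 a' a hcol (by omega), hcol⟩⟩
    rcases lt_trichotomy (u a').1 (u a).1 with h | h | h
    · omega
    · exact absurd (hu.1.1 (Prod.ext h hcol)) hlt.ne
    · exact absurd (hu.2 a a' hcol.symm h) (lt_asymm hlt)
  rw [hfilter, hu.1.card_filter_snd_eq_of_row_le fun r hr₁ hr₂ =>
    mem_nodes_of_le (hu.1.mem_nodes a) hr₁ (by omega)]
  omega

lemma IsStd.row_eq_row {m : MP p d n} (hu : IsStd l u) (hv : IsStd m v)
    (hcol : ∀ a a', (u a).2 = (u a').2 ↔ (v a).2 = (v a').2) (a : Fin n) :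
    (u a).1 = (v a).1 := by
  rw [hu.row_eq, hv.row_eq]
  congr 2
  exact Finset.filter_congr fun a' _ => and_congr_right fun _ => hcol a' a

lemma IsStd.row_eq_row_add_one (hu : IsStd l u) {a b : Fin n} (hab : (a : ℕ) + 1 = b)
    (hcol : (u a).2 = (u b).2) : (u b).1 = (u a).1 + 1 := by
  have hfilter : (Finset.univ.filter fun a' => a' < b ∧ (u a').2 = (u b).2) =
      insert a (Finset.univ.filter fun a' => a' < a ∧ (u a').2 = (u a).2) := by
    ext a'
    simp only [Finset.mem_insert, Finset.mem_filter, Finset.mem_univ, true_and, ← hcol]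
    constructor
    · rintro ⟨hlt, hc⟩
      rcases lt_or_eq_of_le (Fin.le_def.2 (Nat.lt_succ_iff.1 (hab ▸ Fin.lt_def.1 hlt))) with h | h
      · exact Or.inr ⟨h, hc⟩
      · exact Or.inl h
    · rintro (rfl | ⟨h, hc⟩)
      · exact ⟨Fin.lt_def.2 (by omega), rfl⟩
      · exact ⟨Fin.lt_def.2 (by have := Fin.lt_def.1 h; omega), hc⟩
  rw [hu.row_eq b, hu.row_eq a, hfilter, Finset.card_insert_of_notMem (by simp)]

end Tableaux

section Shapes

variable {p d n : ℕ} {C₁ C₂ : Fin p × Fin d} {c : ℕ} {hC : bLT C₁ C₂} {hc₁ : 1 ≤ c}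
  {hc₂ : c < n} {u : Fin n → Nd p d}

lemma IsTab.snd_eq_or (hu : IsTab (.double C₁ C₂ c hC hc₁ hc₂) u) (a : Fin n) :
    (u a).2 = C₁ ∨ (u a).2 = C₂ := by
  rcases hu.mem_nodes a with ⟨h, -⟩ | ⟨h, -⟩
  · exact Or.inl h
  · exact Or.inr h

lemma IsTab.range_fst_snd (hu : IsTab (.double C₁ C₂ c hC hc₁ hc₂) u) :
    Set.range (fun a => (u a).2.1) = {C₁.1, C₂.1} := by
  ext i
  constructor
  · rintro ⟨a, rfl⟩
    rcases hu.snd_eq_or a with h | h <;> simp [h]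
  · rintro (rfl | rfl)
    · obtain ⟨a, ha⟩ := hu.exists_apply_eq (x := (1, C₁)) (Or.inl ⟨rfl, le_rfl, hc₁⟩)
      exact ⟨a, by simp [ha]⟩
    · obtain ⟨a, ha⟩ := hu.exists_apply_eq (x := (1, C₂)) (Or.inr ⟨rfl, le_rfl, by omega⟩)
      exact ⟨a, by simp [ha]⟩

lemma IsTab.snd_eq_snd_iff (hu : IsTab (.double C₁ C₂ c hC hc₁ hc₂) u) (h : C₁.1 ≠ C₂.1)
    (a a' : Fin n) : (u a).2 = (u a').2 ↔ (u a).2.1 = (u a').2.1 := by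
  refine ⟨fun h' => h' ▸ rfl, fun h' => ?_⟩
  rcases hu.snd_eq_or a with ha | ha <;> rcases hu.snd_eq_or a' with ha' | ha' <;>
    simp_all [eq_comm]

end Shapes

lemma lt_of_swap_lt_swap {n : ℕ} {i₀ i₁ a b : Fin n} (hi : (i₀ : ℕ) + 1 = i₁)
    (hab : ¬ (a = i₁ ∧ b = i₀))
    (h : Equiv.swap i₀ i₁ a < Equiv.swap i₀ i₁ b) : a < b := by
  rw [Equiv.swap_apply_def, Equiv.swap_apply_def] at h
  simp only [Fin.lt_def, Fin.ext_iff] at *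
  split_ifs at h <;> omega

section Garnir

variable {p d n : ℕ} {m : MP p d n} {g : Fin n → Nd p d} {i₀ i₁ : Fin n}

lemma IsTab.snd_eq_and_row_eq_of_garnir (hg : IsTab m g) (hgn : ¬ IsStd m g)
    (hi : (i₀ : ℕ) + 1 = i₁) (hs : IsStd m (g ∘ Equiv.swap i₀ i₁)) :
    (g i₀).2 = (g i₁).2 ∧ (g i₀).1 = (g i₁).1 + 1 := by
  have hcol : (g i₀).2 = (g i₁).2 := by
    by_contra hne
    refine hgn ⟨hg, fun a b hab hrow => lt_of_swap_lt_swap hi ?_ (hs.2 _ _ ?_ ?_)⟩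
    · rintro ⟨rfl, rfl⟩
      exact hne hab.symm
    · simpa using hab
    · simpa using hrow
  refine ⟨hcol, ?_⟩
  simpa using hs.row_eq_row_add_one hi (by simpa using hcol.symm)

lemma not_forall_snd_eq_snd_iff_of_garnir {e : ℕ} {j : Fin d → ZMod e} (hsep : SepHyp p d e j)
    {l : MP p d n} {t : Fin n → Nd p d} (ht : IsStd l t) (hg : IsTab m g) (hgn : ¬ IsStd m g)
    (hi : (i₀ : ℕ) + 1 = i₁) (hs : IsStd m (g ∘ Equiv.swap i₀ i₁))
    (hres : ∀ a, resNd e j (t a) = resNd e j (g a)) :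
    ¬ ∀ a a', (t a).2 = (t a').2 ↔ (g a).2 = (g a').2 := by
  intro hcol
  obtain ⟨hbox, hrow⟩ := hg.snd_eq_and_row_eq_of_garnir hgn hi hs
  have hsg : ∀ a, ((g ∘ Equiv.swap i₀ i₁) a).2 = (g a).2 := by
    intro a
    simp only [Function.comp_apply, Equiv.swap_apply_def]
    split_ifs <;> simp_all
  have hrows := ht.row_eq_row hs fun a a' => by rw [hsg, hsg]; exact hcol a a'
  refine resNd_ne_of_row_eq_succ hsep ?_ (hres i₀)
  simpa [hrow] using (hrows i₀).symm

lemma fst_eq_of_garnir {e : ℕ} {j : Fin d → ZMod e} (hsep : SepHyp p d e j)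
    {C₁ C₂ B₁ B₂ : Fin p × Fin d} {c c' : ℕ} {hC : bLT C₁ C₂} {hc₁ : 1 ≤ c} {hc₂ : c < n}
    {hB : bLT B₁ B₂} {hc₁' : 1 ≤ c'} {hc₂' : c' < n} {t : Fin n → Nd p d}
    (ht : IsStd (.double C₁ C₂ c hC hc₁ hc₂) t) (hg : IsTab (.double B₁ B₂ c' hB hc₁' hc₂') g)
    (hgn : ¬ IsStd (.double B₁ B₂ c' hB hc₁' hc₂') g) (hi : (i₀ : ℕ) + 1 = i₁)
    (hs : IsStd (.double B₁ B₂ c' hB hc₁' hc₂') (g ∘ Equiv.swap i₀ i₁))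
    (hres : ∀ a, resNd e j (t a) = resNd e j (g a)) :
    C₁.1 = B₁.1 ∧ C₂.1 = B₂.1 ∧ C₂.1 = B₁.1 := by
  have hfst : ∀ a, (t a).2.1 = (g a).2.1 := fun a => fst_eq_of_resNd_eq (hres a)
  have hpair : C₁.1 = B₁.1 ∧ C₂.1 = B₂.1 ∨ C₁.1 = B₂.1 ∧ C₂.1 = B₁.1 := by
    rw [← Set.pair_eq_pair_iff, ← ht.1.range_fst_snd, ← hg.range_fst_snd]
    simp only [hfst]
  by_cases hCC : C₁.1 = C₂.1
  · grind
  · have hBB : B₁.1 ≠ B₂.1 := by grind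
    refine (not_forall_snd_eq_snd_iff_of_garnir hsep ht hg hgn hi hs hres fun a a' => ?_).elim
    rw [ht.1.snd_eq_snd_iff hCC, hg.snd_eq_snd_iff hBB, hfst, hfst]

end Garnir

section Dominance

variable {p d n : ℕ}

lemma dom_bLE'_single_of_fst_eq (hn : 1 ≤ n) {l : MP p d n} {B : Fin p × Fin d}
    {t g : Fin n → Nd p d} (hle : dom bLE l (.single B)) (ht : IsTab l t)
    (hg : IsTab (.single B) g) (hfst : ∀ a, (t a).2.1 = (g a).2.1) :
    dom bLE' l (.single B) := by
  have hB : ∀ a, (g a).2.1 = B.1 := fun a => by rw [(hg.mem_nodes a).1]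
  cases l with
  | single C =>
    obtain ⟨a, ha⟩ := ht.exists_apply_eq (x := (1, C)) ⟨rfl, le_rfl, hn⟩
    exact bLE'_of_bLE hle (by rw [← hB a, ← hfst a, ha])
  | double C₁ _ _ _ hc₁ _ =>
    obtain ⟨a, ha⟩ := ht.exists_apply_eq (x := (1, C₁)) (Or.inl ⟨rfl, le_rfl, hc₁⟩)
    exact bLE'_of_bLE hle (by rw [← hB a, ← hfst a, ha])

lemma dom_bLE'_double_of_fst_eq {C₁ C₂ B₁ B₂ : Fin p × Fin d} {c c' : ℕ} {hC : bLT C₁ C₂}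
    {hc₁ : 1 ≤ c} {hc₂ : c < n} {hB : bLT B₁ B₂} {hc₁' : 1 ≤ c'} {hc₂' : c' < n}
    (h₁ : C₁.1 = B₁.1) (h₂ : C₂.1 = B₂.1) (h₃ : C₂.1 = B₁.1)
    (hle : dom bLE (.double C₁ C₂ c hC hc₁ hc₂) (.double B₁ B₂ c' hB hc₁' hc₂')) :
    dom bLE' (.double C₁ C₂ c hC hc₁ hc₂) (.double B₁ B₂ c' hB hc₁' hc₂') := by
  obtain ⟨hle₁, hle₂, hle₃⟩ := hle
  refine ⟨bLE'_of_bLE hle₁ h₁, bLE'_of_bLE hle₂ h₂, ?_⟩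
  rcases hle₃ with h | h | ⟨ha, hlt, h⟩
  exacts [Or.inl h, Or.inr (Or.inl h), Or.inr (Or.inr ⟨ha, hlt, bLE'_of_bLE h h₃⟩)]

end Dominance

/-- under the separation hypothesis, if `λ ⊴ μ`, `λ ≠ μ`, `g` is a
Garnir tableau of shape `μ` (not standard, but becomes standard upon
interchanging the entries `k` and `k+1` for some `1 ≤ k ≤ n−1`), and some
standard tableau `t` of shape `λ` has `res(t) = res(g)`, then `λ ⊴' μ`. -/
theorem dom_bLE'_of_res_eq_garnir (p d n : ℕ) (hn : 1 ≤ n)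
    (e : ℕ) (j : Fin d → ZMod e) (hsep : SepHyp p d e j)
    (l m : MP p d n) (hle : dom bLE l m)
    (g : Fin n → Nd p d) (hg : IsTab m g) (hgnstd : ¬ IsStd m g)
    (hgarnir : ∃ k : ℕ, ∃ (hk1 : 1 ≤ k) (hk2 : k ≤ n - 1),
      IsStd m (g ∘ Equiv.swap (⟨k - 1, by omega⟩ : Fin n) (⟨k, by omega⟩ : Fin n)))
    (t : Fin n → Nd p d) (ht : IsStd l t)
    (hres : ∀ a : Fin n, resNd e j (t a) = resNd e j (g a)) :
    dom bLE' l m := by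
  obtain ⟨k, hk₁, hk₂, hs⟩ := hgarnir
  cases m with
  | single B =>
    exact dom_bLE'_single_of_fst_eq hn hle ht.1 hg fun a => fst_eq_of_resNd_eq (hres a)
  | double B₁ B₂ c' hB hc₁' hc₂' =>
    cases l with
    | single C => exact hle.elim
    | double C₁ C₂ c hC hc₁ hc₂ =>
      obtain ⟨h₁, h₂, h₃⟩ :=
        fst_eq_of_garnir hsep ht hg hgnstd (show k - 1 + 1 = k by omega) hs hres
      exact dom_bLE'_double_of_fst_eq h₁ h₂ h₃ hle
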